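/- arXiv:2605.24092 — 4 statements merged into one kernel-verified Lean document; each statement's English description precedes it below -/
import Mathlib

section
/- Let w̄_{n,k} denote the number of words of length n over the alphabet {1,…,n} that avoid a weakly increasing subsequence of length k+1. Then for all n, m ≥ 1 and fixed k, w̄_{n,k} · w̄_{m,k} ≤ w̄_{n+m,k}. -/
/-- `wInc n k` is the number of words of length `n` over the alphabet `{1,…,n}` that avoid a
weakly increasing subsequence of length `k+1`. -/
noncomputable def wInc (n k : ℕ) : ℕ :=
  Nat.card {w : Fin n → Fin n //
    ¬ ∃ s : Fin (k + 1) → Fin n, StrictMono s ∧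
      ∀ i j : Fin (k + 1), i < j → w (s i) ≤ w (s j)}

/-- Concatenate `u` (shifted up by `m`) with `v`. -/
def glue (n m : ℕ) (u : Fin n → Fin n) (v : Fin m → Fin m) : Fin (n + m) → Fin (n + m) :=
  fun i =>
    if h : i.val < n then
      ⟨m + (u ⟨i.val, h⟩).val, by have := (u ⟨i.val, h⟩).isLt; omega⟩
    else
      ⟨(v ⟨i.val - n, by have := i.isLt; omega⟩).val,
        by have := (v ⟨i.val - n, by have := i.isLt; omega⟩).isLt; omega⟩

lemma glue_avoid (n m k : ℕ) (u : Fin n → Fin n) (v : Fin m → Fin m)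
    (hu : ¬ ∃ s : Fin (k + 1) → Fin n, StrictMono s ∧
      ∀ i j : Fin (k + 1), i < j → u (s i) ≤ u (s j))
    (hv : ¬ ∃ s : Fin (k + 1) → Fin m, StrictMono s ∧
      ∀ i j : Fin (k + 1), i < j → v (s i) ≤ v (s j)) :
    ¬ ∃ s : Fin (k + 1) → Fin (n + m), StrictMono s ∧
      ∀ i j : Fin (k + 1), i < j → glue n m u v (s i) ≤ glue n m u v (s j) := by
  rintro ⟨s, hs, hmono⟩
  by_cases hlast : (s (Fin.last k)).val < n
  · -- everything in the first block
    apply hu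
    have hall : ∀ i : Fin (k + 1), (s i).val < n := by
      intro i
      have h1 : (s i).val ≤ (s (Fin.last k)).val := hs.monotone (Fin.le_last i)
      omega
    refine ⟨fun i => ⟨(s i).val, hall i⟩, ?_, ?_⟩
    · intro i j hij
      exact hs hij
    · intro i j hij
      have h := hmono i j hij
      simp only [glue] at h
      rw [dif_pos (hall i), dif_pos (hall j)] at h
      have h' : m + (u ⟨(s i).val, hall i⟩).val ≤ m + (u ⟨(s j).val, hall j⟩).val :=
        Fin.mk_le_mk.mp h
      simp only [Fin.le_def]
      omega
  · by_cases hfirst : (s 0).val < n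
    · -- mixed: contradiction
      have h0last : (0 : Fin (k + 1)) < Fin.last k := by
        rcases lt_or_eq_of_le (Fin.zero_le (Fin.last k)) with h | h
        · exact h
        · exfalso; rw [← h] at hlast; exact hlast hfirst
      have h := hmono 0 (Fin.last k) h0last
      simp only [glue] at h
      rw [dif_pos hfirst, dif_neg hlast] at h
      have h' : m + (u ⟨(s 0).val, hfirst⟩).val ≤
          (v ⟨(s (Fin.last k)).val - n, by have := (s (Fin.last k)).isLt; omega⟩).val :=
        Fin.mk_le_mk.mp h
      have := (v ⟨(s (Fin.last k)).val - n, by have := (s (Fin.last k)).isLt; omega⟩).isLt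
      omega
    · -- everything in the second block
      apply hv
      have hall : ∀ i : Fin (k + 1), ¬ (s i).val < n := by
        intro i
        have h1 : (s 0).val ≤ (s i).val := hs.monotone (Fin.zero_le i)
        omega
      have hb : ∀ i : Fin (k + 1), (s i).val - n < m := by
        intro i; have := (s i).isLt; have := hall i; omega
      refine ⟨fun i => ⟨(s i).val - n, hb i⟩, ?_, ?_⟩
      · intro i j hij
        have h1 : (s i).val < (s j).val := hs hij
        have := hall i
        simp only [Fin.lt_def]
        omega
      · intro i j hij
        have h := hmono i j hij
        simp only [glue] at h
        rw [dif_neg (hall i), dif_neg (hall j)] at h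
        simp only [Fin.le_def]
        exact Fin.mk_le_mk.mp h
lemma glue_inj (n m : ℕ) (u u' : Fin n → Fin n) (v v' : Fin m → Fin m)
    (h : glue n m u v = glue n m u' v') : u = u' ∧ v = v' := by
  constructor
  · funext i
    have hi : (i : ℕ) < n := i.isLt
    have h1 := congrFun h ⟨i.val, by omega⟩
    simp only [glue] at h1
    rw [dif_pos hi, dif_pos hi] at h1
    have h2 : m + (u ⟨i.val, hi⟩).val = m + (u' ⟨i.val, hi⟩).val := congrArg Fin.val h1
    have : (u i).val = (u' i).val := by
      have hii : (⟨i.val, hi⟩ : Fin n) = i := rfl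
      rw [hii] at h2; omega
    exact Fin.ext this
  · funext j
    have hj : (j : ℕ) < m := j.isLt
    have h1 := congrFun h ⟨n + j.val, by omega⟩
    have hnot : ¬ n + j.val < n := by omega
    simp only [glue] at h1
    rw [dif_neg hnot, dif_neg hnot] at h1
    simp only [Fin.mk.injEq] at h1
    have hjj : (⟨n + j.val - n, by omega⟩ : Fin m) = j := by
      apply Fin.ext; simp
    rw [hjj] at h1
    exact Fin.ext h1

/-- For fixed `k`, the counts `wInc n k` are supermultiplicative:
`wInc n k * wInc m k ≤ wInc (n+m) k` for all `n, m ≥ 1`. -/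
theorem wInc_supermultiplicative (n m k : ℕ) (hn : 1 ≤ n) (hm : 1 ≤ m) :
    wInc n k * wInc m k ≤ wInc (n + m) k := by
  unfold wInc
  rw [← Nat.card_prod]
  refine Nat.card_le_card_of_injective
    (fun p => ⟨glue n m p.1.1 p.2.1, glue_avoid n m k p.1.1 p.2.1 p.1.2 p.2.2⟩) ?_
  rintro ⟨⟨u, hu⟩, ⟨v, hv⟩⟩ ⟨⟨u', hu'⟩, ⟨v', hv'⟩⟩ hp
  have := glue_inj n m u u' v v' (congrArg Subtype.val hp)
  simp only [Prod.mk.injEq, Subtype.mk.injEq]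
  exact ⟨this.1, this.2⟩
end

section
/- Let w_{n,k} denote the number of words of length n over {1,…,n} avoiding a strictly decreasing subsequence of length k+1, and let Av_n(k+1,…,1) denote the set of permutations of {1,…,n} avoiding the decreasing pattern of length k+1. Then w_{n,k} ≤ binomial(2n-1, n) · |Av_n(k+1, k, …, 1)|. -/
/-! A word `w` is recovered from its multiset of letters together with its standardization
`(Tuple.sort w)⁻¹`: the letters determine the sorted word `w ∘ Tuple.sort w`. Every inversion of
the standardization is an inversion of `w`, so the standardization of a word avoiding
`(k+1)k⋯1` is an avoiding permutation. Hence `w ↦ (letters, standardization)` injects the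
avoiding words into a product of size `binomial(2n-1, n) · |Av_n(k+1,…,1)|`. -/

open Equiv

/-- `wDec n k` is the number of words of length `n` over the alphabet `{1,…,n}` that avoid a
strictly decreasing subsequence of length `k+1`. -/
noncomputable def wDec (n k : ℕ) : ℕ :=
  Nat.card {w : Fin n → Fin n //
    ¬ ∃ s : Fin (k + 1) → Fin n, StrictMono s ∧
      ∀ i j : Fin (k + 1), i < j → w (s j) < w (s i)}

def HasStrictAntiSubseq {ι α : Type*} [Preorder ι] [Preorder α] (m : ℕ) (f : ι → α) : Prop :=
  ∃ s : Fin m → ι, StrictMono s ∧ StrictAnti (f ∘ s)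

theorem HasStrictAntiSubseq.of_inversion_imp {ι α β : Type*} [Preorder ι] [Preorder α]
    [Preorder β] {m : ℕ} {f : ι → α} {g : ι → β} (hg : HasStrictAntiSubseq m g)
    (hinv : ∀ a b, a < b → g b < g a → f b < f a) : HasStrictAntiSubseq m f :=
  let ⟨s, hs, hgs⟩ := hg
  ⟨s, hs, fun _ _ hij => hinv _ _ (hs hij) (hgs hij)⟩

section Standardization

variable {α : Type*} [LinearOrder α] {n : ℕ}

def letters (w : Fin n → α) : Sym α n :=
  ⟨(List.ofFn w : Multiset α), by simp⟩

def standardization (w : Fin n → α) : Perm (Fin n) :=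
  (Tuple.sort w)⁻¹

theorem lt_of_standardization_lt {w : Fin n → α} {a b : Fin n} (hab : a < b)
    (hstd : standardization w b < standardization w a) : w b < w a := by
  have hσ := (Tuple.eq_sort_iff (f := w) (σ := Tuple.sort w)).mp rfl
  simp only [standardization] at hstd
  have hle : w b ≤ w a := by simpa using hσ.1 hstd.le
  refine hle.lt_of_ne fun heq => hab.not_gt ?_
  simpa using hσ.2 _ _ hstd (by simpa using heq)

theorem comp_sort_eq_of_letters_eq {w w' : Fin n → α} (h : letters w = letters w') :
    w ∘ Tuple.sort w = w' ∘ Tuple.sort w' := by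
  have hperm : (List.ofFn w).Perm (List.ofFn w') :=
    Multiset.coe_eq_coe.mp (congrArg Subtype.val h)
  refine List.ofFn_injective <| List.Perm.eq_of_sortedLE (Tuple.monotone_sort w).sortedLE_ofFn
    (Tuple.monotone_sort w').sortedLE_ofFn ?_
  exact ((Tuple.sort w).ofFn_comp_perm w).trans <|
    hperm.trans ((Tuple.sort w').ofFn_comp_perm w').symm

theorem letters_standardization_injective :
    Function.Injective fun w : Fin n → α => (letters w, standardization w) := by
  intro w w' h
  obtain ⟨hletters, hstd⟩ := Prod.mk.inj h
  have hsort : Tuple.sort w = Tuple.sort w' := inv_injective hstd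
  have hsorted := comp_sort_eq_of_letters_eq hletters
  rw [← hsort] at hsorted
  simpa [Function.comp_assoc] using congrArg (· ∘ ⇑(Tuple.sort w)⁻¹) hsorted

theorem HasStrictAntiSubseq.of_standardization {m : ℕ} {w : Fin n → α}
    (h : HasStrictAntiSubseq m (standardization w)) : HasStrictAntiSubseq m w :=
  h.of_inversion_imp fun _ _ => lt_of_standardization_lt

end Standardization

theorem natCard_avoiding_words_le (α : Type*) [LinearOrder α] [Finite α] (n m : ℕ) :
    Nat.card {w : Fin n → α // ¬ HasStrictAntiSubseq m w} ≤
      Nat.card (Sym α n) * Nat.card {π : Perm (Fin n) // ¬ HasStrictAntiSubseq m π} := by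
  rw [← Nat.card_prod]
  refine Nat.card_le_card_of_injective
    (fun w => (letters w.1, ⟨standardization w.1, mt .of_standardization w.2⟩)) ?_
  intro w w' h
  exact Subtype.ext <| letters_standardization_injective <| by simpa using h

/-- `wDec n k` is at most `binomial(2n-1, n)` times the number of permutations of `{1,…,n}`
avoiding the decreasing pattern `(k+1)k⋯1`. -/
theorem wDec_le_choose_mul_avoiders (n k : ℕ) :
    wDec n k ≤ Nat.choose (2 * n - 1) n *
      Nat.card {π : Equiv.Perm (Fin n) //
        ¬ ∃ s : Fin (k + 1) → Fin n, StrictMono s ∧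
          ∀ i j : Fin (k + 1), i < j → π (s j) < π (s i)} := by
  have hletters : Nat.card (Sym (Fin n) n) = Nat.choose (2 * n - 1) n := by
    rw [Sym.natCard_sym_eq_choose, Nat.card_fin, two_mul]
  rw [← hletters]
  exact natCard_avoiding_words_le (Fin n) n (k + 1)
end

section
/- Let k ≥ 1 and let a_1 ≥ a_2 ≥ ⋯ ≥ a_k ≥ 0 be real numbers with a_1 + ⋯ + a_k = 1. Then the product ∏_{i=1}^k (1+a_i)^{1+a_i} / a_i^{2a_i} is maximized exactly when a_i = 1/k for all i, with maximum value (k+1)^{k+1} / k^{k-1}. -/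
/-!
Taking logarithms, the product becomes `∑ i, logFactor (a i)` with
`logFactor x = (1 + x) log (1 + x) - 2 x log x`, and the bound is `k logFactor (1/k)`.
As `logFactor'' x = 1/(1 + x) - 2/x < 0`, `logFactor` is strictly concave on `[0, ∞)`, so
Jensen's inequality with equal weights `1/k` gives the bound, with equality exactly when all `a i`
equal their mean `1/k`.
-/

open Real Finset Set

section EqualWeights

variable {E ι : Type*} [AddCommGroup E] [Module ℝ E] [Fintype ι] [Nonempty ι]
  {s : Set E} {f : E → ℝ} {p : ι → E}

lemma sum_inv_card_eq_one : ∑ _i : ι, (Fintype.card ι : ℝ)⁻¹ = 1 := by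
  simp [Fintype.card_ne_zero]

lemma ConcaveOn.sum_map_le_card_mul_map_mean (hf : ConcaveOn ℝ s f) (hp : ∀ i, p i ∈ s) :
    ∑ i, f (p i) ≤ Fintype.card ι * f ((Fintype.card ι : ℝ)⁻¹ • ∑ i, p i) := by
  have := hf.le_map_sum (t := univ) (w := fun _ ↦ (Fintype.card ι : ℝ)⁻¹)
    (fun _ _ ↦ by positivity) sum_inv_card_eq_one (fun i _ ↦ hp i)
  rw [← smul_sum, ← smul_sum, smul_eq_mul, inv_mul_le_iff₀ (by positivity)] at this
  exact this

lemma StrictConcaveOn.sum_map_eq_card_mul_map_mean_iff (hf : StrictConcaveOn ℝ s f)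
    (hp : ∀ i, p i ∈ s) :
    ∑ i, f (p i) = Fintype.card ι * f ((Fintype.card ι : ℝ)⁻¹ • ∑ i, p i) ↔
      ∀ j, p j = (Fintype.card ι : ℝ)⁻¹ • ∑ i, p i := by
  have := hf.map_sum_eq_iff (t := univ) (w := fun _ ↦ (Fintype.card ι : ℝ)⁻¹)
    (fun _ _ ↦ by positivity) sum_inv_card_eq_one (fun i _ ↦ hp i)
  rw [← smul_sum, ← smul_sum, smul_eq_mul, eq_comm,
    inv_mul_eq_iff_eq_mul₀ (by positivity)] at this
  simpa using this

end EqualWeights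

noncomputable def logFactor (x : ℝ) : ℝ := (1 + x) * log (1 + x) - 2 * (x * log x)

lemma continuous_logFactor : Continuous logFactor :=
  (continuous_mul_log.comp (continuous_const_add 1)).sub (continuous_const.mul continuous_mul_log)

lemma hasDerivAt_logFactor {x : ℝ} (hx : 0 < x) :
    HasDerivAt logFactor (log (1 + x) - 2 * log x - 1) x := by
  have h := ((hasDerivAt_mul_log (by positivity : 1 + x ≠ 0)).comp x
    ((hasDerivAt_id x).const_add 1)).sub ((hasDerivAt_mul_log hx.ne').const_mul 2)
  exact h.congr_deriv (by ring)

-- The derivative is `log ((1 + x) / x ^ 2) - 1`, and `(1 + x) / x ^ 2 = x⁻¹ + x⁻¹ ^ 2`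
-- decreases.
lemma strictConcaveOn_logFactor : StrictConcaveOn ℝ (Ici 0) logFactor := by
  refine StrictAntiOn.strictConcaveOn_of_deriv (convex_Ici 0) continuous_logFactor.continuousOn ?_
  rw [interior_Ici]
  intro x (hx : 0 < x) y (hy : 0 < y) hxy
  rw [(hasDerivAt_logFactor hx).deriv, (hasDerivAt_logFactor hy).deriv]
  have hlog := log_lt_log (by positivity) (show y⁻¹ + y⁻¹ ^ 2 < x⁻¹ + x⁻¹ ^ 2 by
    have := inv_strictAntiOn hx hy hxy
    gcongr)
  rw [show y⁻¹ + y⁻¹ ^ 2 = (1 + y) / y ^ 2 by field_simp; ring,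
    show x⁻¹ + x⁻¹ ^ 2 = (1 + x) / x ^ 2 by field_simp; ring,
    log_div (by positivity) (by positivity), log_div (by positivity) (by positivity),
    log_pow, log_pow] at hlog
  push_cast at hlog
  linarith

lemma rpow_div_rpow_eq_exp_logFactor {x : ℝ} (hx : 0 ≤ x) :
    (1 + x) ^ (1 + x) / x ^ (2 * x) = exp (logFactor x) := by
  rcases hx.eq_or_lt with rfl | hx
  · simp [logFactor]
  · rw [rpow_def_of_pos (by positivity), rpow_def_of_pos hx, ← exp_sub, logFactor]
    ring_nf

lemma exp_mul_logFactor_inv {n : ℝ} (hn : 0 < n) :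
    exp (n * logFactor n⁻¹) = (n + 1) ^ (n + 1) / n ^ (n - 1) := by
  have h : 1 + n⁻¹ = (n + 1) / n := by field_simp
  rw [rpow_def_of_pos (by positivity), rpow_def_of_pos hn, ← exp_sub, logFactor, h,
    log_div (by positivity) hn.ne', log_inv]
  congr 1
  field_simp
  ring

open Real in
theorem prod_max_decreasing_general (k : ℕ) (a : Fin k → ℝ)
    (h0 : ∀ i, 0 ≤ a i)
    (hsum : ∑ i, a i = 1) :
    (∏ i, (1 + a i) ^ (1 + a i) / a i ^ (2 * a i)) ≤
      ((k : ℝ) + 1) ^ ((k : ℝ) + 1) / (k : ℝ) ^ ((k : ℝ) - 1) ∧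
    ((∏ i, (1 + a i) ^ (1 + a i) / a i ^ (2 * a i)) =
        ((k : ℝ) + 1) ^ ((k : ℝ) + 1) / (k : ℝ) ^ ((k : ℝ) - 1) ↔
      ∀ i, a i = 1 / (k : ℝ)) := by
  have hk : k ≠ 0 := by rintro rfl; simp at hsum
  have : Nonempty (Fin k) := ⟨⟨0, Nat.pos_of_ne_zero hk⟩⟩
  have hmean : (Fintype.card (Fin k) : ℝ)⁻¹ • ∑ i, a i = 1 / k := by simp [hsum]
  have hprod : ∏ i, (1 + a i) ^ (1 + a i) / a i ^ (2 * a i) = exp (∑ i, logFactor (a i)) := by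
    rw [exp_sum]
    exact prod_congr rfl fun i _ ↦ rpow_div_rpow_eq_exp_logFactor (h0 i)
  have hmax : ((k : ℝ) + 1) ^ ((k : ℝ) + 1) / (k : ℝ) ^ ((k : ℝ) - 1) = exp
      (Fintype.card (Fin k) * logFactor ((Fintype.card (Fin k) : ℝ)⁻¹ • ∑ i, a i)) := by
    rw [hmean, Fintype.card_fin, one_div, exp_mul_logFactor_inv (by positivity)]
  rw [hprod, hmax, exp_le_exp, exp_eq_exp, ← hmean]
  exact ⟨strictConcaveOn_logFactor.concaveOn.sum_map_le_card_mul_map_mean h0,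
    strictConcaveOn_logFactor.sum_map_eq_card_mul_map_mean_iff h0⟩

open Real in
/-- For `k ≥ 1` and reals `a_1 ≥ a_2 ≥ ⋯ ≥ a_k ≥ 0` with `∑ a_i = 1`, the product
`∏ (1+a_i)^(1+a_i) / a_i^(2a_i)` (real powers, with the convention `0^0 = 1`) is at most
`(k+1)^(k+1)/k^(k-1)`, with equality exactly when every `a_i = 1/k`. -/
theorem prod_max_decreasing (k : ℕ) (hk : 1 ≤ k) (a : Fin k → ℝ)
    (hdec : ∀ i j : Fin k, i ≤ j → a j ≤ a i) (h0 : ∀ i, 0 ≤ a i)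
    (hsum : ∑ i, a i = 1) :
    (∏ i, (1 + a i) ^ (1 + a i) / a i ^ (2 * a i)) ≤
      ((k : ℝ) + 1) ^ ((k : ℝ) + 1) / (k : ℝ) ^ ((k : ℝ) - 1) ∧
    ((∏ i, (1 + a i) ^ (1 + a i) / a i ^ (2 * a i)) =
        ((k : ℝ) + 1) ^ ((k : ℝ) + 1) / (k : ℝ) ^ ((k : ℝ) - 1) ↔
      ∀ i, a i = 1 / (k : ℝ)) :=
  prod_max_decreasing_general k a h0 hsum
end

section
/- Let k ≥ 1 and let a_1 ≥ a_2 ≥ ⋯ ≥ a_k ≥ 0 be real numbers with a_1 + ⋯ + a_k = 1. Then the quantity ∏_{i=1}^k 1/((1−a_i)^{1−a_i} · a_i^{2a_i}) is maximized exactly when a_i = 1/k for all i, with maximum value k^{k+1}/(k−1)^{k-1}. -/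
/-!
Writing `g x = (1 - x) * log (1 - x) + 2 * x * log x`, the `i`-th factor is `exp (-g aᵢ)`, so the
product is `exp (-∑ g aᵢ)`. Since `x log x` is strictly convex on `[0, ∞)`, `g` is strictly convex
on `[0, 1]`, so Jensen's inequality with the uniform weights `1/k` gives
`∑ g aᵢ ≥ k g (1/k)`, with equality iff every `aᵢ` is the mean `1/k`. Finally
`exp (-k g (1/k)) = k^(k+1) / (k-1)^(k-1)`.
-/

open Real Finset

noncomputable def logDenom (x : ℝ) : ℝ := (1 - x) * log (1 - x) + 2 * (x * log x)

lemma convexOn_one_sub_mul_log : ConvexOn ℝ (Set.Iic (1 : ℝ)) fun x ↦ (1 - x) * log (1 - x) := by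
  let reflect : ℝ →ᵃ[ℝ] ℝ := AffineMap.lineMap 1 0
  have hreflect (x : ℝ) : reflect x = 1 - x := by
    rw [AffineMap.lineMap_apply_ring']; ring
  have hpre : reflect ⁻¹' Set.Ici 0 = Set.Iic 1 := by
    ext x; simp [hreflect]
  simpa [hpre, Function.comp_def, hreflect] using convexOn_mul_log.comp_affineMap reflect

lemma strictConvexOn_logDenom : StrictConvexOn ℝ (Set.Icc (0 : ℝ) 1) logDenom := by
  have hmul_log := strictConvexOn_mul_log.subset Set.Icc_subset_Ici_self (convex_Icc 0 1)
  have hsplit : logDenom =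
      (fun x ↦ (1 - x) * log (1 - x)) + (fun x ↦ x * log x) + (fun x ↦ x * log x) := by
    funext x; simp only [logDenom, Pi.add_apply]; ring
  rw [hsplit]
  exact ((convexOn_one_sub_mul_log.subset Set.Icc_subset_Iic_self (convex_Icc 0 1))
    |>.add_strictConvexOn hmul_log).add hmul_log

-- At the endpoints both sides agree through `0 ^ 0 = 1` and `0 * log 0 = 0`.
lemma rpow_mul_rpow_eq_exp_logDenom {x : ℝ} (hx : x ∈ Set.Icc (0 : ℝ) 1) :
    (1 - x) ^ (1 - x) * x ^ (2 * x) = exp (logDenom x) := by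
  obtain ⟨hx0, hx1⟩ := hx
  rcases hx0.eq_or_lt with rfl | hx0
  · simp [logDenom]
  rcases hx1.eq_or_lt with rfl | hx1
  · simp [logDenom]
  rw [rpow_def_of_pos (by linarith), rpow_def_of_pos hx0, ← exp_add, logDenom]
  ring_nf

lemma prod_one_div_eq_exp_neg_sum_logDenom {ι : Type*} [Fintype ι] {a : ι → ℝ}
    (ha : ∀ i, a i ∈ Set.Icc (0 : ℝ) 1) :
    ∏ i, 1 / ((1 - a i) ^ (1 - a i) * a i ^ (2 * a i)) = exp (-∑ i, logDenom (a i)) := by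
  simp only [rpow_mul_rpow_eq_exp_logDenom (ha _), one_div, ← exp_neg, ← sum_neg_distrib, exp_sum]

lemma exp_neg_natCast_mul_logDenom_one_div {k : ℕ} (hk : 1 ≤ k) :
    exp (-(k * logDenom (1 / k))) = (k : ℝ) ^ ((k : ℝ) + 1) / ((k : ℝ) - 1) ^ ((k : ℝ) - 1) := by
  rcases hk.eq_or_lt with rfl | hk
  · norm_num [logDenom]
  have hk1 : (1 : ℝ) < k := by exact_mod_cast hk
  rw [rpow_def_of_pos (by linarith), rpow_def_of_pos (by linarith), ← exp_sub, logDenom,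
    show (1 : ℝ) - 1 / k = (k - 1) / k by field_simp, log_div (by linarith) (by linarith),
    one_div, log_inv]
  congr 1
  field_simp
  ring

section UniformJensen

variable {ι : Type*} [Fintype ι] {s : Set ℝ} {f : ℝ → ℝ} {p : ι → ℝ}

lemma sum_smul_eq_sum_div_card (q : ι → ℝ) :
    ∑ i, (Fintype.card ι : ℝ)⁻¹ • q i = (∑ i, q i) / Fintype.card ι := by
  rw [← smul_sum, smul_eq_mul, inv_mul_eq_div]

lemma sum_inv_card [Nonempty ι] : ∑ _i : ι, (Fintype.card ι : ℝ)⁻¹ = 1 := by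
  simp [card_univ]

lemma ConvexOn.card_mul_map_avg_le [Nonempty ι] (hf : ConvexOn ℝ s f) (hp : ∀ i, p i ∈ s) :
    Fintype.card ι * f ((∑ i, p i) / Fintype.card ι) ≤ ∑ i, f (p i) := by
  have := hf.map_sum_le (fun _ _ ↦ by positivity) sum_inv_card (fun i _ ↦ hp i)
  rw [sum_smul_eq_sum_div_card, sum_smul_eq_sum_div_card, le_div_iff₀ (by positivity)] at this
  linarith

lemma StrictConvexOn.card_mul_map_avg_eq_iff [Nonempty ι] (hf : StrictConvexOn ℝ s f)
    (hp : ∀ i, p i ∈ s) :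
    Fintype.card ι * f ((∑ i, p i) / Fintype.card ι) = ∑ i, f (p i) ↔
      ∀ i, p i = (∑ i, p i) / Fintype.card ι := by
  have := hf.map_sum_eq_iff (fun _ _ ↦ by positivity) sum_inv_card (fun i _ ↦ hp i)
  rw [sum_smul_eq_sum_div_card, sum_smul_eq_sum_div_card, eq_div_iff (by positivity)] at this
  simpa [mul_comm] using this

end UniformJensen

theorem prod_max_increasing_general (k : ℕ) (hk : 1 ≤ k) (a : Fin k → ℝ)
    (h0 : ∀ i, 0 ≤ a i)
    (hsum : ∑ i, a i = 1) :
    (∏ i, 1 / ((1 - a i) ^ (1 - a i) * a i ^ (2 * a i))) ≤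
      (k : ℝ) ^ ((k : ℝ) + 1) / ((k : ℝ) - 1) ^ ((k : ℝ) - 1) ∧
    ((∏ i, 1 / ((1 - a i) ^ (1 - a i) * a i ^ (2 * a i))) =
        (k : ℝ) ^ ((k : ℝ) + 1) / ((k : ℝ) - 1) ^ ((k : ℝ) - 1) ↔
      ∀ i, a i = 1 / (k : ℝ)) := by
  have : Nonempty (Fin k) := Fin.pos_iff_nonempty.mp hk
  have ha : ∀ i, a i ∈ Set.Icc (0 : ℝ) 1 := fun i ↦
    ⟨h0 i, hsum ▸ single_le_sum (fun j _ ↦ h0 j) (mem_univ i)⟩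
  have hle := strictConvexOn_logDenom.convexOn.card_mul_map_avg_le ha
  have heq := strictConvexOn_logDenom.card_mul_map_avg_eq_iff ha
  rw [Fintype.card_fin, hsum] at hle heq
  rw [prod_one_div_eq_exp_neg_sum_logDenom ha, ← exp_neg_natCast_mul_logDenom_one_div hk,
    exp_le_exp, exp_eq_exp, neg_le_neg_iff, neg_inj]
  exact ⟨hle, eq_comm.trans heq⟩

open Real in
/-- For `k ≥ 1` and reals `a_1 ≥ a_2 ≥ ⋯ ≥ a_k ≥ 0` with `∑ a_i = 1`, the quantity
`∏ 1/((1−a_i)^(1−a_i) · a_i^(2a_i))` (real powers, convention `0^0 = 1`) is at most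
`k^(k+1)/(k−1)^(k−1)`, with equality exactly when every `a_i = 1/k`. -/
theorem prod_max_increasing (k : ℕ) (hk : 1 ≤ k) (a : Fin k → ℝ)
    (hdec : ∀ i j : Fin k, i ≤ j → a j ≤ a i) (h0 : ∀ i, 0 ≤ a i)
    (hsum : ∑ i, a i = 1) :
    (∏ i, 1 / ((1 - a i) ^ (1 - a i) * a i ^ (2 * a i))) ≤
      (k : ℝ) ^ ((k : ℝ) + 1) / ((k : ℝ) - 1) ^ ((k : ℝ) - 1) ∧
    ((∏ i, 1 / ((1 - a i) ^ (1 - a i) * a i ^ (2 * a i))) =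
        (k : ℝ) ^ ((k : ℝ) + 1) / ((k : ℝ) - 1) ^ ((k : ℝ) - 1) ↔
      ∀ i, a i = 1 / (k : ℝ)) :=
  prod_max_increasing_general k hk a h0 hsum
end
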